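/- arXiv:1505.06930 — 6 statements merged into one kernel-verified Lean document; each statement's English description precedes it below -/
import Mathlib

section
/- Every finite set A of natural numbers containing 0 tiles modulo p: for every prime p and every finite nonempty set A ⊆ ℕ with 0 ∈ A, there exist a finite set B ⊆ ℕ and a positive integer N such that A(X)·B(X) ≡ 1 + X + ... + X^{N-1} (mod X^N - 1, p), where A(X) = Σ_{a∈A} X^a and B(X) = Σ_{b∈B} X^b. -/
/-!
Over `𝔽_p` and for `N = p ^ k` one has `X ^ N - 1 = (X - 1) ^ N` and
`1 + X + ⋯ + X ^ (N - 1) = (X - 1) ^ (N - 1)`. Writing `A(X) = (X - 1) ^ s * u` with `u(1) ≠ 0`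
and taking `N > s`, the factor `u` is invertible modulo `(X - 1) ^ N`, so
`b = u⁻¹ * (X - 1) ^ (N - 1 - s)` solves `A * b ≡ (X - 1) ^ (N - 1)`. Finally every class modulo
`X ^ N - 1` contains a polynomial with 0/1 coefficients: classes of such polynomials are closed
under addition, since shifting exponents by multiples of `N` makes supports disjoint.
-/

open Polynomial

namespace Polynomial

section ZeroOneRepresentable

variable {R : Type*} [CommRing R] {N : ℕ}

lemma X_pow_sub_one_dvd_X_pow_add_mul_sub (b m : ℕ) :
    (X ^ N - 1 : R[X]) ∣ X ^ (b + N * m) - X ^ b := by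
  have h := sub_dvd_pow_sub_pow (X ^ N : R[X]) 1 m
  rw [one_pow] at h
  calc _ ∣ X ^ b * ((X ^ N) ^ m - 1) := h.mul_left _
    _ = _ := by ring

lemma exists_finset_sum_X_pow_sub_add_dvd (hN : 0 < N) {g h : R[X]} {B C : Finset ℕ}
    (hB : (X ^ N - 1 : R[X]) ∣ ∑ b ∈ B, X ^ b - g)
    (hC : (X ^ N - 1 : R[X]) ∣ ∑ c ∈ C, X ^ c - h) :
    ∃ D : Finset ℕ, (X ^ N - 1 : R[X]) ∣ ∑ d ∈ D, X ^ d - (g + h) := by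
  set m := B.sup id + 1
  have hdisj : Disjoint B (C.map (addRightEmbedding (N * m))) := by
    refine Finset.disjoint_left.2 fun b hb hb' => ?_
    obtain ⟨c, -, rfl⟩ := Finset.mem_map.1 hb'
    have : c + N * m ≤ B.sup id := Finset.le_sup (f := id) hb
    have : m ≤ N * m := Nat.le_mul_of_pos_left m hN
    omega
  refine ⟨B ∪ C.map (addRightEmbedding (N * m)), ?_⟩
  have hshift : (X ^ N - 1 : R[X]) ∣ ∑ c ∈ C, (X ^ (c + N * m) - X ^ c) :=
    Finset.dvd_sum fun c _ => X_pow_sub_one_dvd_X_pow_add_mul_sub c m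
  rw [Finset.sum_sub_distrib] at hshift
  convert (hB.add hC).add hshift using 1
  rw [Finset.sum_union hdisj, Finset.sum_map]
  simp only [addRightEmbedding_apply]
  ring

variable (R) in
def zeroOneRepresentable (hN : 0 < N) : AddSubmonoid R[X] where
  carrier := {g | ∃ B : Finset ℕ, (X ^ N - 1 : R[X]) ∣ ∑ b ∈ B, X ^ b - g}
  add_mem' := fun ⟨_, hB⟩ ⟨_, hC⟩ => exists_finset_sum_X_pow_sub_add_dvd hN hB hC
  zero_mem' := ⟨∅, by simp⟩

lemma zeroOneRepresentable_eq_top (hR : Function.Surjective (Nat.cast : ℕ → R)) (hN : 0 < N) :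
    zeroOneRepresentable R hN = ⊤ := by
  refine (AddSubmonoid.eq_top_iff' _).2 fun g => ?_
  induction g using Polynomial.induction_on' with
  | add g h hg hh => exact add_mem hg hh
  | monomial n a =>
    obtain ⟨m, rfl⟩ := hR a
    rw [← nsmul_one, ← smul_monomial, ← X_pow_eq_monomial]
    exact nsmul_mem (show X ^ n ∈ zeroOneRepresentable R hN from ⟨{n}, by simp⟩) m

lemma exists_finset_sum_X_pow_sub_dvd (hR : Function.Surjective (Nat.cast : ℕ → R))
    (hN : 0 < N) (g : R[X]) : ∃ B : Finset ℕ, (X ^ N - 1 : R[X]) ∣ ∑ b ∈ B, X ^ b - g :=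
  (SetLike.ext_iff.1 (zeroOneRepresentable_eq_top hR hN) g).2 trivial

end ZeroOneRepresentable

section CharP

variable {p : ℕ} [Fact p.Prime]

lemma geom_sum_X_char_pow {R : Type*} [CommRing R] [CharP R p] (k : ℕ) :
    ∑ i ∈ Finset.range (p ^ k), (X : R[X]) ^ i = (X - 1) ^ (p ^ k - 1) := by
  nontriviality R
  apply (monic_X_sub_C (1 : R)).isRegular.right
  have hk : p ^ k - 1 + 1 = p ^ k :=
    Nat.sub_add_cancel (Nat.one_le_pow _ _ (Fact.out : p.Prime).pos)
  simp only [C_1]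
  rw [geom_sum_mul, ← pow_succ, hk, sub_pow_char_pow, one_pow]

lemma exists_mul_sub_X_sub_C_pow_dvd {K : Type*} [Field K] {a : K[X]} (ha : a ≠ 0) {c : K}
    {n : ℕ} (hn : a.rootMultiplicity c < n) :
    ∃ b : K[X], (X - C c) ^ n ∣ a * b - (X - C c) ^ (n - 1) := by
  obtain ⟨u, hu, hndvd⟩ := a.exists_eq_pow_rootMultiplicity_mul_and_not_dvd ha c
  obtain ⟨e, d, hed⟩ : IsCoprime ((X - C c) ^ n) u :=
    ((irreducible_X_sub_C c).coprime_iff_not_dvd.2 hndvd).pow_left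
  set s := a.rootMultiplicity c
  obtain ⟨t, rfl⟩ : ∃ t, n = s + t + 1 := ⟨n - 1 - s, by omega⟩
  refine ⟨d * (X - C c) ^ t, -e * (X - C c) ^ (s + t), ?_⟩
  rw [hu, Nat.add_sub_cancel]
  linear_combination (X - C c) ^ (s + t) * hed

lemma exists_mul_sub_geom_sum_dvd {K : Type*} [Field K] [CharP K p] {a : K[X]} (ha : a ≠ 0) :
    ∃ N, 0 < N ∧ ∃ b : K[X], (X ^ N - 1 : K[X]) ∣ a * b - ∑ i ∈ Finset.range N, X ^ i := by
  have hp : p.Prime := Fact.out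
  set k := a.rootMultiplicity 1
  obtain ⟨b, hb⟩ := exists_mul_sub_X_sub_C_pow_dvd ha (Nat.lt_pow_self (n := k) hp.one_lt)
  refine ⟨p ^ k, pow_pos hp.pos k, b, ?_⟩
  have hXN : (X - 1 : K[X]) ^ p ^ k = X ^ p ^ k - 1 := by rw [sub_pow_char_pow, one_pow]
  rw [C_1] at hb
  rwa [geom_sum_X_char_pow, ← hXN]

end CharP

end Polynomial

/-- Every finite set of naturals containing 0 tiles modulo `p`:
`A(X)·B(X) ≡ 1 + X + ⋯ + X^{N-1}  (mod X^N - 1, p)`. -/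
theorem stmt_1 (p : ℕ) (hp : p.Prime) (A : Finset ℕ) (hA : 0 ∈ A) :
    ∃ (B : Finset ℕ) (N : ℕ), 0 < N ∧
      ((X : Polynomial (ZMod p)) ^ N - 1) ∣
        ((∑ a ∈ A, (X : Polynomial (ZMod p)) ^ a) * (∑ b ∈ B, (X : Polynomial (ZMod p)) ^ b)
          - ∑ i ∈ Finset.range N, (X : Polynomial (ZMod p)) ^ i) := by
  have : Fact p.Prime := ⟨hp⟩
  set f : (ZMod p)[X] := ∑ a ∈ A, X ^ a
  have hf : f ≠ 0 := fun h => by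
    simpa [f, finsetSum_coeff, coeff_X_pow, hA] using congr_arg (coeff · 0) h
  obtain ⟨N, hN, b, hb⟩ := exists_mul_sub_geom_sum_dvd (p := p) hf
  obtain ⟨B, hB⟩ := exists_finset_sum_X_pow_sub_dvd ZMod.natCast_zmod_surjective hN b
  refine ⟨B, N, hN, ?_⟩
  convert (hB.mul_left f).add hb using 1
  ring
end

section
/- For every finite set A of natural numbers containing 0, there exist a finite set B ⊆ ℕ and a positive integer N such that A(X)·B(X) = 1 + X + ... + X^{N-1} exactly in F_2[X] (a compact tiling modulo 2). -/
open Polynomial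

/-- Every finite set of naturals containing 0 admits a compact tiling modulo 2:
`A(X)·B(X) = 1 + X + ⋯ + X^{N-1}` exactly in `F_2[X]`. -/
theorem stmt_2 (A : Finset ℕ) (hA : 0 ∈ A) :
    ∃ (B : Finset ℕ) (N : ℕ), 0 < N ∧
      (∑ a ∈ A, (X : Polynomial (ZMod 2)) ^ a) * (∑ b ∈ B, (X : Polynomial (ZMod 2)) ^ b)
        = ∑ i ∈ Finset.range N, (X : Polynomial (ZMod 2)) ^ i := by
  set f : Polynomial (ZMod 2) := ∑ a ∈ A, X ^ a with hf
  have hone : ∀ a : ZMod 2, a ≠ 0 → a = 1 := by decide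
  have hf0 : f.coeff 0 = 1 := by
    rw [hf, Polynomial.finset_sum_coeff, Finset.sum_eq_single 0]
    · simp
    · intro b hb hb0
      simp [Polynomial.coeff_X_pow, Ne.symm hb0]
    · intro h; exact absurd hA h
  have hfne : f ≠ 0 := by
    intro h; rw [h] at hf0; simp at hf0
  have hmonic : f.Monic := hone _ (Polynomial.leadingCoeff_ne_zero.mpr hfne)
  -- pigeonhole: two powers of X with the same remainder mod f
  obtain ⟨i, j, hij, hmod⟩ : ∃ i j : ℕ, i < j ∧ X ^ i %ₘ f = X ^ j %ₘ f := by
    obtain ⟨i, j, hij, h⟩ := Finite.exists_ne_map_eq_of_infinite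
      (fun k : ℕ => (fun n : Fin f.natDegree => (X ^ k %ₘ f).coeff n))
    have heq : X ^ i %ₘ f = X ^ j %ₘ f := by
      ext n
      by_cases hn : n < f.natDegree
      · exact congrFun h ⟨n, hn⟩
      · rw [Polynomial.coeff_eq_zero_of_degree_lt, Polynomial.coeff_eq_zero_of_degree_lt]
        · exact lt_of_lt_of_le (Polynomial.degree_modByMonic_lt _ hmonic)
            ((Polynomial.degree_eq_natDegree hfne).le.trans (by exact_mod_cast Nat.le_of_not_lt hn))
        · exact lt_of_lt_of_le (Polynomial.degree_modByMonic_lt _ hmonic)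
            ((Polynomial.degree_eq_natDegree hfne).le.trans (by exact_mod_cast Nat.le_of_not_lt hn))
    rcases hij.lt_or_gt with h' | h'
    · exact ⟨i, j, h', heq⟩
    · exact ⟨j, i, h', heq.symm⟩
  have hcop : IsCoprime (f) ((X : Polynomial (ZMod 2)) ^ i) := by
    have hXirr : Irreducible (X : Polynomial (ZMod 2)) := Polynomial.irreducible_X
    have : ¬ (X : Polynomial (ZMod 2)) ∣ f := by
      rw [Polynomial.X_dvd_iff, hf0]; exact one_ne_zero
    exact ((hXirr.coprime_iff_not_dvd.mpr this).pow_left).symm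
  have hdvd : f ∣ X ^ j - X ^ i := by
    rw [← Polynomial.modByMonic_eq_zero_iff_dvd hmonic, Polynomial.sub_modByMonic, hmod,
      sub_self]
  obtain ⟨q, hq⟩ : f ∣ X ^ (j - i) - 1 := by
    apply hcop.dvd_of_dvd_mul_left
    have : (X : Polynomial (ZMod 2)) ^ i * (X ^ (j - i) - 1) = X ^ j - X ^ i := by
      rw [mul_sub, mul_one, ← pow_add, Nat.add_sub_cancel' hij.le]
    rwa [this]
  set k := j - i with hk
  have hkpos : 0 < k := Nat.sub_pos_of_lt hij
  have h2 : (2 : Polynomial (ZMod 2)) = 0 := by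
    have := CharP.cast_eq_zero (Polynomial (ZMod 2)) 2
    simpa using this
  set g : Polynomial (ZMod 2) := (∑ n ∈ Finset.range k, X ^ n) * q with hg
  have hX1 : (X - 1 : Polynomial (ZMod 2)) ≠ 0 := by
    intro h
    have := congrArg (fun p => Polynomial.coeff p 1) h
    simp [Polynomial.coeff_one] at this
  have key : f * g = ∑ n ∈ Finset.range (2 * k), X ^ n := by
    apply mul_right_cancel₀ hX1
    rw [geom_sum_mul]
    calc f * g * (X - 1) = (f * q) * ((∑ n ∈ Finset.range k, X ^ n) * (X - 1)) := by ring
      _ = (X ^ k - 1) * (X ^ k - 1) := by rw [← hq, geom_sum_mul]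
      _ = X ^ (2 * k) - 1 := by
          rw [two_mul, pow_add]
          linear_combination (1 - (X : Polynomial (ZMod 2)) ^ k) * h2
  have hB : ∑ b ∈ g.support, (X : Polynomial (ZMod 2)) ^ b = g := by
    conv_rhs => rw [Polynomial.as_sum_support_C_mul_X_pow g]
    refine (Finset.sum_congr rfl fun n hn => ?_).symm
    rw [hone _ (Polynomial.mem_support_iff.mp hn), map_one, one_mul]
  exact ⟨g.support, 2 * k, by omega, by rw [hB]; exact key⟩
end

section
/- If A, B are finite sets of naturals, every element of the multiset A +_N B has odd multiplicity, and there exist b₁ ≠ b₂ in B with the copies of A translated by b₁ and b₂ coinciding modulo N (i.e., {a + b₁ mod N : a ∈ A} = {a + b₂ mod N : a ∈ A} with multiplicities), then (A, B \ {b₁, b₂}) still has every residue mod N with the same parity of multiplicity, hence is also a mod-2 tiling canon of Z_N. -/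
/-- Multiplicity of the residue `t` in the multiset `A +_N B`. -/
def multAB (A B : Finset ℕ) (N t : ℕ) : ℕ :=
  ((A ×ˢ B).filter (fun ab => (ab.1 + ab.2) % N = t)).card

lemma multAB_eq_sum (A B : Finset ℕ) (N t : ℕ) :
    multAB A B N t = ∑ b ∈ B, (A.filter (fun a => (a + b) % N = t)).card := by
  unfold multAB
  rw [Finset.card_filter, Finset.sum_product_right]
  exact Finset.sum_congr rfl fun b _ => (Finset.card_filter _ _).symm

lemma fiber_count (A : Finset ℕ) (N t b : ℕ) :
    (A.filter (fun a => (a + b) % N = t)).card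
      = (A.val.map (fun a => (a + b) % N)).count t := by
  rw [Multiset.count_map]
  simp only [Finset.card, Finset.filter_val]
  congr 1
  exact Multiset.filter_congr (fun a _ => eq_comm)

/-- If `(A,B)` is a mod-2 tiling canon of `Z_N` and two distinct entries `b₁ ≠ b₂` of `B`
produce coinciding translated copies of `A` modulo `N`, then removing both entries
preserves the parity of every multiplicity, hence `(A, B \ {b₁,b₂})` is again a
mod-2 tiling canon of `Z_N`. -/
theorem stmt_6 (A B : Finset ℕ) (N : ℕ) (hN : 0 < N) (b₁ b₂ : ℕ)
    (hb₁ : b₁ ∈ B) (hb₂ : b₂ ∈ B) (hne : b₁ ≠ b₂)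
    (hodd : ∀ t < N, Odd (multAB A B N t))
    (hcoin : A.val.map (fun a => (a + b₁) % N) = A.val.map (fun a => (a + b₂) % N)) :
    (∀ t < N, multAB A (B \ {b₁, b₂}) N t % 2 = multAB A B N t % 2) ∧
    (∀ t < N, Odd (multAB A (B \ {b₁, b₂}) N t)) := by
  have key : ∀ t, multAB A (B \ {b₁, b₂}) N t % 2 = multAB A B N t % 2 := by
    intro t
    have hsub : ({b₁, b₂} : Finset ℕ) ⊆ B := by
      intro x hx
      simp only [Finset.mem_insert, Finset.mem_singleton] at hx
      rcases hx with rfl | rfl <;> assumption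
    have hsplit := Finset.sum_sdiff (f := fun b => (A.filter (fun a => (a + b) % N = t)).card) hsub
    have heq : (A.filter (fun a => (a + b₁) % N = t)).card
        = (A.filter (fun a => (a + b₂) % N = t)).card := by
      rw [fiber_count, fiber_count, hcoin]
    have hpair : ∑ b ∈ ({b₁, b₂} : Finset ℕ), (A.filter (fun a => (a + b) % N = t)).card
        = 2 * (A.filter (fun a => (a + b₁) % N = t)).card := by
      rw [Finset.sum_pair hne, heq]; ring
    have hB : (∑ b ∈ B, (A.filter (fun a => (a + b) % N = t)).card)
        = (∑ b ∈ B \ {b₁, b₂}, (A.filter (fun a => (a + b) % N = t)).card)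
          + 2 * (A.filter (fun a => (a + b₁) % N = t)).card := by
      rw [← hsplit, hpair]
    rw [multAB_eq_sum, multAB_eq_sum, hB]
    omega
  refine ⟨fun t _ => key t, fun t ht => ?_⟩
  have := (hodd t ht)
  rw [Nat.odd_iff] at this ⊢
  rw [key t, this]
end

section
/- For all k ≥ 1, in F_2[X]: adding the pattern A_{k+1} = {0, 1, 2^{k+1}} (i.e. the polynomial 1 + X + X^{2^{k+1}}) at each position in {2^k - 1, 2^k, ..., 2^{k+1} - 2} (i.e. multiplying by Σ_{i=2^k-1}^{2^{k+1}-2} X^i) to the initial word 1^{2^k-1} 0 1^{2^k-1} 0 (i.e. Σ_{i=0}^{2^k-2} X^i + Σ_{i=2^k}^{2^{k+1}-2} X^i) makes all positions 0 through 2^{k+1} - 1 have odd count, and the counts at positions 2^{k+1} through 2^{k+2} - 1 reproduce the word 0^{2^k-1} 1 1^{2^k-1} 0 mod 2. -/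
open Polynomial

lemma aux_shift (a b : ℕ) :
    (X : Polynomial (ZMod 2)) * ∑ i ∈ Finset.Ico a b, (X : Polynomial (ZMod 2)) ^ i
      = ∑ i ∈ Finset.Ico (a + 1) (b + 1), (X : Polynomial (ZMod 2)) ^ i := by
  rw [Finset.mul_sum, show Finset.Ico (a+1) (b+1) = Finset.map (addLeftEmbedding 1) (Finset.Ico a b) from by rw [Finset.map_add_left_Ico]; congr 1 <;> omega, Finset.sum_map]
  simp [addLeftEmbedding, pow_succ, pow_add, mul_comm]

lemma aux_main (m : ℕ) (hm : 1 ≤ m) :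
    (∑ i ∈ Finset.range (m - 1), (X : Polynomial (ZMod 2)) ^ i
        + ∑ i ∈ Finset.Ico m (2 * m - 1), (X : Polynomial (ZMod 2)) ^ i)
      + (1 + X + X ^ (2 * m))
          * (∑ i ∈ Finset.Ico (m - 1) (2 * m - 1), (X : Polynomial (ZMod 2)) ^ i)
    = (∑ i ∈ Finset.range (2 * m), (X : Polynomial (ZMod 2)) ^ i)
      + X ^ (2 * m)
          * (∑ i ∈ Finset.Ico (m - 1) (2 * m - 1), (X : Polynomial (ZMod 2)) ^ i) := by
  have hXS := aux_shift (m - 1) (2 * m - 1)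
  rw [show m - 1 + 1 = m from by omega, show 2 * m - 1 + 1 = 2 * m from by omega] at hXS
  have h1 : ∑ i ∈ Finset.range m, (X : Polynomial (ZMod 2)) ^ i
      = ∑ i ∈ Finset.range (m - 1), (X : Polynomial (ZMod 2)) ^ i + X ^ (m - 1) := by
    conv_lhs => rw [show m = (m - 1) + 1 from by omega]
    rw [Finset.sum_range_succ]
  have h2 : ∑ i ∈ Finset.Ico 0 m, (X : Polynomial (ZMod 2)) ^ i
        + ∑ i ∈ Finset.Ico m (2 * m), (X : Polynomial (ZMod 2)) ^ i
      = ∑ i ∈ Finset.Ico 0 (2 * m), (X : Polynomial (ZMod 2)) ^ i :=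
    Finset.sum_Ico_consecutive _ (by omega) (by omega)
  simp only [Finset.range_eq_Ico] at *
  have h3 : ∑ i ∈ Finset.Ico m (2 * m - 1), (X : Polynomial (ZMod 2)) ^ i + X ^ (2 * m - 1)
      = ∑ i ∈ Finset.Ico m (2 * m), (X : Polynomial (ZMod 2)) ^ i := by
    rw [← Finset.sum_Ico_succ_top (show m ≤ 2 * m - 1 by omega)]
    congr 2
    omega
  have h4 : ∑ i ∈ Finset.Ico (m - 1) (2 * m - 1), (X : Polynomial (ZMod 2)) ^ i
      = X ^ (m - 1) + ∑ i ∈ Finset.Ico m (2 * m - 1), (X : Polynomial (ZMod 2)) ^ i := by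
    have h := Finset.sum_eq_sum_Ico_succ_bot (show m - 1 < 2 * m - 1 by omega)
      (fun i => (X : Polynomial (ZMod 2)) ^ i)
    rw [show m - 1 + 1 = m from by omega] at h
    exact h
  have hchar : ∀ p : Polynomial (ZMod 2), p + p = 0 := fun p => CharTwo.add_self_eq_zero p
  rw [add_mul, add_mul, one_mul, hXS, h4]
  rw [← h2, h1, ← h3]
  linear_combination hchar (∑ i ∈ Finset.Ico m (2 * m - 1), (X : Polynomial (ZMod 2)) ^ i)

/-- Lemma `doubletaille`: adding the pattern `A_{k+1} = {0,1,2^{k+1}}` at every position of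
`{2^k - 1, …, 2^{k+1} - 2}` to the word `1^{2^k-1} 0 1^{2^k-1} 0` makes all positions
`0, …, 2^{k+1}-1` odd, and the positions `≥ 2^{k+1}` reproduce the word
`0^{2^k-1} 1 1^{2^k-1} 0` (mod 2). -/
theorem stmt_8 (k : ℕ) (hk : 1 ≤ k) :
    (∑ i ∈ Finset.range (2 ^ k - 1), (X : Polynomial (ZMod 2)) ^ i
        + ∑ i ∈ Finset.Ico (2 ^ k) (2 ^ (k + 1) - 1), (X : Polynomial (ZMod 2)) ^ i)
      + (1 + X + X ^ (2 ^ (k + 1)))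
          * (∑ i ∈ Finset.Ico (2 ^ k - 1) (2 ^ (k + 1) - 1), (X : Polynomial (ZMod 2)) ^ i)
    = (∑ i ∈ Finset.range (2 ^ (k + 1)), (X : Polynomial (ZMod 2)) ^ i)
      + X ^ (2 ^ (k + 1))
          * (∑ i ∈ Finset.Ico (2 ^ k - 1) (2 ^ (k + 1) - 1), (X : Polynomial (ZMod 2)) ^ i) := by
  have hN : 2 ^ (k + 1) = 2 * 2 ^ k := by ring
  rw [hN]
  exact aux_main (2 ^ k) Nat.one_le_two_pow
end

section
/- For every k ≥ 1, the pattern A_k = {0, 1, 2^k} tiles modulo 2 compactly with period N = 4^k - 1: there exists a set B_k ⊆ {0, ..., 4^k - 2^k - 1} with |B_k| = 4^k - 3^k such that in F_2[X], (1 + X + X^{2^k}) · (Σ_{b ∈ B_k} X^b) = 1 + X + X^2 + ... + X^{4^k - 2}. -/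
open Polynomial Finset

/-- Recursive pattern of pairs: `Bp n` corresponds to level `k = n+1`. -/
def Bp : ℕ → Finset (ℕ × ℕ)
  | 0 => {(0, 0)}
  | n + 1 =>
      (((Finset.range (2 ^ (n + 1)) ×ˢ Finset.range (2 ^ (n + 1))).image
            (fun p => (2 * p.1, 2 * p.2)) ∪
          (Bp n).image (fun p => (2 * p.1 + 2, 2 * p.2 + 1))) ∪
        (Bp n).image (fun p => (2 * p.1 + 1, 2 * p.2 + 2))) ∪
        (Bp n).image (fun p => (2 * p.1 + 1, 2 * p.2 + 1))

lemma Bp_succ (n : ℕ) : Bp (n + 1) =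
      (((Finset.range (2 ^ (n + 1)) ×ˢ Finset.range (2 ^ (n + 1))).image
            (fun p => (2 * p.1, 2 * p.2)) ∪
          (Bp n).image (fun p => (2 * p.1 + 2, 2 * p.2 + 1))) ∪
        (Bp n).image (fun p => (2 * p.1 + 1, 2 * p.2 + 2))) ∪
        (Bp n).image (fun p => (2 * p.1 + 1, 2 * p.2 + 1)) := rfl

lemma Bp_bounds (n : ℕ) : ∀ p ∈ Bp n, p.1 ≤ 2 ^ (n + 1) - 2 ∧ p.2 ≤ 2 ^ (n + 1) - 2 := by
  induction n with
  | zero => intro p hp; simp [Bp] at hp; subst hp; simp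
  | succ n ih =>
    intro p hp
    have h1 : 1 ≤ 2 ^ (n + 1) := Nat.one_le_two_pow
    have h2 : 2 ^ (n + 2) = 2 * 2 ^ (n + 1) := by ring
    rw [Bp_succ] at hp
    simp only [Finset.mem_union, Finset.mem_image, Finset.mem_product, Finset.mem_range] at hp
    rcases hp with ((⟨q, ⟨hq1, hq2⟩, rfl⟩ | ⟨q, hq, rfl⟩) | ⟨q, hq, rfl⟩) | ⟨q, hq, rfl⟩
    · omega
    all_goals (obtain ⟨ha, hb⟩ := ih q hq; omega)

lemma Bp_disj3 (n : ℕ) :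
    Disjoint
      (((Finset.range (2 ^ (n + 1)) ×ˢ Finset.range (2 ^ (n + 1))).image
            (fun p => (2 * p.1, 2 * p.2)) ∪
          (Bp n).image (fun p => (2 * p.1 + 2, 2 * p.2 + 1))) ∪
        (Bp n).image (fun p => (2 * p.1 + 1, 2 * p.2 + 2)))
      ((Bp n).image (fun p => (2 * p.1 + 1, 2 * p.2 + 1))) := by
  rw [Finset.disjoint_left]
  rintro ⟨a, b⟩ h h'
  simp only [Finset.mem_union, Finset.mem_image, Finset.mem_product, Finset.mem_range,
    Prod.mk.injEq] at h h'
  obtain ⟨q, _, hq1, hq2⟩ := h'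
  rcases h with (⟨r, _, hr1, hr2⟩ | ⟨r, _, hr1, hr2⟩) | ⟨r, _, hr1, hr2⟩ <;> omega

lemma Bp_disj2 (n : ℕ) :
    Disjoint
      ((Finset.range (2 ^ (n + 1)) ×ˢ Finset.range (2 ^ (n + 1))).image
            (fun p => (2 * p.1, 2 * p.2)) ∪
          (Bp n).image (fun p => (2 * p.1 + 2, 2 * p.2 + 1)))
      ((Bp n).image (fun p => (2 * p.1 + 1, 2 * p.2 + 2))) := by
  rw [Finset.disjoint_left]
  rintro ⟨a, b⟩ h h'
  simp only [Finset.mem_union, Finset.mem_image, Finset.mem_product, Finset.mem_range,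
    Prod.mk.injEq] at h h'
  obtain ⟨q, _, hq1, hq2⟩ := h'
  rcases h with ⟨r, _, hr1, hr2⟩ | ⟨r, _, hr1, hr2⟩ <;> omega

lemma Bp_disj1 (n : ℕ) :
    Disjoint
      ((Finset.range (2 ^ (n + 1)) ×ˢ Finset.range (2 ^ (n + 1))).image
            (fun p => (2 * p.1, 2 * p.2)))
      ((Bp n).image (fun p => (2 * p.1 + 2, 2 * p.2 + 1))) := by
  rw [Finset.disjoint_left]
  rintro ⟨a, b⟩ h h'
  simp only [Finset.mem_image, Finset.mem_product, Finset.mem_range, Prod.mk.injEq] at h h'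
  obtain ⟨q, _, hq1, hq2⟩ := h'
  obtain ⟨r, _, hr1, hr2⟩ := h
  omega

lemma inj00 : Function.Injective (fun p : ℕ × ℕ => (2 * p.1, 2 * p.2)) := by
  rintro ⟨a, b⟩ ⟨c, d⟩ h; simp only [Prod.mk.injEq] at h; ext <;> omega

lemma inj21 : Function.Injective (fun p : ℕ × ℕ => (2 * p.1 + 2, 2 * p.2 + 1)) := by
  rintro ⟨a, b⟩ ⟨c, d⟩ h; simp only [Prod.mk.injEq] at h; ext <;> omega

lemma inj12 : Function.Injective (fun p : ℕ × ℕ => (2 * p.1 + 1, 2 * p.2 + 2)) := by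
  rintro ⟨a, b⟩ ⟨c, d⟩ h; simp only [Prod.mk.injEq] at h; ext <;> omega

lemma inj11 : Function.Injective (fun p : ℕ × ℕ => (2 * p.1 + 1, 2 * p.2 + 1)) := by
  rintro ⟨a, b⟩ ⟨c, d⟩ h; simp only [Prod.mk.injEq] at h; ext <;> omega

lemma Bp_card (n : ℕ) : (Bp n).card = 4 ^ (n + 1) - 3 ^ (n + 1) := by
  induction n with
  | zero => simp [Bp]
  | succ n ih =>
    rw [Bp_succ, Finset.card_union_of_disjoint (Bp_disj3 n),
      Finset.card_union_of_disjoint (Bp_disj2 n),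
      Finset.card_union_of_disjoint (Bp_disj1 n),
      Finset.card_image_of_injective _ inj00, Finset.card_image_of_injective _ inj21,
      Finset.card_image_of_injective _ inj12, Finset.card_image_of_injective _ inj11,
      Finset.card_product, Finset.card_range, ih]
    have h34 : 3 ^ (n + 1) ≤ 4 ^ (n + 1) := Nat.pow_le_pow_left (by norm_num) _
    have e1 : 2 ^ (n + 1) * 2 ^ (n + 1) = 4 ^ (n + 1) := by
      rw [← Nat.mul_pow]
    have e2 : 4 ^ (n + 2) = 4 * 4 ^ (n + 1) := by ring
    have e3 : 3 ^ (n + 2) = 3 * 3 ^ (n + 1) := by ring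
    omega

lemma two_eq_zero : (2 : Polynomial (ZMod 2)) = 0 := by
  exact_mod_cast CharP.cast_eq_zero (Polynomial (ZMod 2)) 2

lemma sum_range_two_mul (m : ℕ) (v : Polynomial (ZMod 2)) :
    ∑ i ∈ Finset.range (2 * m), v ^ i = (1 + v) * ∑ a ∈ Finset.range m, (v ^ 2) ^ a := by
  induction m with
  | zero => simp
  | succ m ih =>
    have h : 2 * (m + 1) = 2 * m + 1 + 1 := by omega
    rw [h, Finset.sum_range_succ, Finset.sum_range_succ, Finset.sum_range_succ]
    rw [mul_add, ← ih]
    ring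

/-- The key bivariate identity, proven by induction. -/
lemma key (n : ℕ) : ∀ x v : Polynomial (ZMod 2),
    (1 + v + x) * ∑ p ∈ Bp n, v ^ p.1 * x ^ p.2 =
      (∑ a ∈ Finset.range (2 ^ (n + 1)), v ^ a) * (∑ b ∈ Finset.range (2 ^ (n + 1)), x ^ b) +
        v ^ (2 ^ (n + 1) - 1) * x ^ (2 ^ (n + 1) - 1) := by
  induction n with
  | zero =>
    intro x v
    have h2 : (2:ℕ) ^ (0 + 1) = 2 := rfl
    simp only [Bp, Finset.sum_singleton, pow_zero, pow_one, h2, mul_one,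
      Finset.sum_range_succ, Finset.sum_range_zero, zero_add]
    linear_combination (-(v * x)) * two_eq_zero
  | succ n ih =>
    intro x v
    have h1 : 1 ≤ 2 ^ (n + 1) := Nat.one_le_two_pow
    have hN : 2 ^ (n + 1 + 1) - 1 = 2 * (2 ^ (n + 1) - 1) + 1 := by
      have : 2 ^ (n + 1 + 1) = 2 * 2 ^ (n + 1) := by ring
      omega
    have h2m : 2 ^ (n + 1 + 1) = 2 * 2 ^ (n + 1) := by ring
    set N := 2 ^ (n + 1) - 1 with hNdef
    rw [Bp_succ, Finset.sum_union (Bp_disj3 n),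
      Finset.sum_union (Bp_disj2 n), Finset.sum_union (Bp_disj1 n),
      Finset.sum_image (fun a _ b _ h => inj00 h),
      Finset.sum_image (fun a _ b _ h => inj21 h),
      Finset.sum_image (fun a _ b _ h => inj12 h),
      Finset.sum_image (fun a _ b _ h => inj11 h)]
    set u := ∑ p ∈ Bp n, (v ^ 2) ^ p.1 * (x ^ 2) ^ p.2 with hu
    have e0 : ∑ p ∈ Finset.range (2 ^ (n+1)) ×ˢ Finset.range (2 ^ (n+1)),
        v ^ (2 * p.1) * x ^ (2 * p.2)
        = (∑ a ∈ Finset.range (2 ^ (n+1)), (v ^ 2) ^ a) *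
          (∑ b ∈ Finset.range (2 ^ (n+1)), (x ^ 2) ^ b) := by
      rw [Finset.sum_mul_sum, Finset.sum_product]
      exact Finset.sum_congr rfl fun a _ => Finset.sum_congr rfl fun b _ => by ring
    have e1 : ∑ p ∈ Bp n, v ^ (2 * p.1 + 2) * x ^ (2 * p.2 + 1) = v ^ 2 * x * u := by
      rw [hu, Finset.mul_sum]; exact Finset.sum_congr rfl fun p _ => by ring
    have e2 : ∑ p ∈ Bp n, v ^ (2 * p.1 + 1) * x ^ (2 * p.2 + 2) = v * x ^ 2 * u := by
      rw [hu, Finset.mul_sum]; exact Finset.sum_congr rfl fun p _ => by ring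
    have e3 : ∑ p ∈ Bp n, v ^ (2 * p.1 + 1) * x ^ (2 * p.2 + 1) = v * x * u := by
      rw [hu, Finset.mul_sum]; exact Finset.sum_congr rfl fun p _ => by ring
    rw [e0, e1, e2, e3, hN, h2m, sum_range_two_mul _ v, sum_range_two_mul _ x]
    have hih := ih (x ^ 2) (v ^ 2)
    linear_combination (v * x) * hih + (v * x * (x + v + x * v) * u) * two_eq_zero

lemma sum_range_mul_base {M : Type*} [AddCommMonoid M] (m q : ℕ) (f : ℕ → M) :
    ∑ i ∈ Finset.range (m * q), f i
      = ∑ a ∈ Finset.range m, ∑ b ∈ Finset.range q, f (a * q + b) := by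
  induction m with
  | zero => simp
  | succ m ih =>
    have h : (m + 1) * q = m * q + q := by ring
    rw [h, Finset.sum_range_add, ih, Finset.sum_range_succ]

/-- Main theorem (existence): for every `k ≥ 1`, the pattern `A_k = {0,1,2^k}` tiles
modulo 2 compactly with period `N = 4^k - 1`: there is `B_k ⊆ {0, …, 4^k - 2^k - 1}`
with `|B_k| = 4^k - 3^k` and `(1 + X + X^{2^k})·B_k(X) = 1 + X + ⋯ + X^{4^k - 2}` in `F_2[X]`. -/
theorem stmt_14 (k : ℕ) (hk : 1 ≤ k) :
    ∃ B : Finset ℕ, B ⊆ Finset.range (4 ^ k - 2 ^ k) ∧ B.card = 4 ^ k - 3 ^ k ∧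
      (1 + X + X ^ (2 ^ k)) * (∑ b ∈ B, (X : Polynomial (ZMod 2)) ^ b)
        = ∑ i ∈ Finset.range (4 ^ k - 1), (X : Polynomial (ZMod 2)) ^ i := by
  obtain ⟨n, rfl⟩ : ∃ n, k = n + 1 := ⟨k - 1, by omega⟩
  set q := 2 ^ (n + 1) with hq
  have hq1 : 2 ≤ q := by
    rw [hq]
    calc (2:ℕ) = 2 ^ 1 := rfl
    _ ≤ 2 ^ (n+1) := Nat.pow_le_pow_right (by norm_num) (by omega)
  have hqq : q * q = 4 ^ (n + 1) := by rw [hq, ← Nat.mul_pow]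
  have hinj : ∀ p1 ∈ Bp n, ∀ p2 ∈ Bp n,
      p1.1 * q + p1.2 = p2.1 * q + p2.2 → p1 = p2 := by
    rintro ⟨a, b⟩ h1 ⟨c, d⟩ h2 h
    obtain ⟨-, hb⟩ := Bp_bounds n _ h1
    obtain ⟨-, hd⟩ := Bp_bounds n _ h2
    simp only at h
    have hb' : b < q := by omega
    have hd' : d < q := by omega
    have key1 : ∀ a b : ℕ, b < q → (a * q + b) / q = a := fun a b hbq => by
      rw [mul_comm, Nat.mul_add_div (by omega), Nat.div_eq_of_lt hbq, add_zero]
    have ha : a = c := by rw [← key1 a b hb', ← key1 c d hd', h]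
    subst ha
    have hbd : b = d := Nat.add_left_cancel h
    simp [hbd]
  refine ⟨(Bp n).image (fun p => p.1 * q + p.2), ?_, ?_, ?_⟩
  · intro m hm
    simp only [Finset.mem_image] at hm
    obtain ⟨p, hp, rfl⟩ := hm
    obtain ⟨ha, hb⟩ := Bp_bounds n _ hp
    rw [Finset.mem_range]
    have h4 : 4 ^ (n + 1) = q * q := hqq.symm
    have : p.1 * q + p.2 ≤ (q - 2) * q + (q - 2) :=
      add_le_add (Nat.mul_le_mul_right q ha) hb
    have h2 : (q - 2) * q + (q - 2) < q * q - q := by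
      have e : (q - 2) * q = q * q - 2 * q := by
        rw [Nat.sub_mul]
      have hsq : q ≤ q * q := Nat.le_mul_of_pos_left q (by omega)
      have h2q : 2 * q ≤ q * q := by
        apply Nat.mul_le_mul_right; omega
      omega
    rw [h4]
    omega
  · rw [Finset.card_image_of_injOn fun p1 h1 p2 h2 h => hinj p1 h1 p2 h2 h, Bp_card]
  · rw [Finset.sum_image hinj]
    have expand : ∀ p : ℕ × ℕ, (X : Polynomial (ZMod 2)) ^ (p.1 * q + p.2)
        = (X ^ q) ^ p.1 * X ^ p.2 := fun p => by
      rw [pow_add, mul_comm p.1 q, pow_mul]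
    calc (1 + X + X ^ q) * ∑ p ∈ Bp n, (X : Polynomial (ZMod 2)) ^ (p.1 * q + p.2)
        = (1 + (X ^ q) + X) * ∑ p ∈ Bp n, ((X : Polynomial (ZMod 2)) ^ q) ^ p.1 * X ^ p.2 := by
          rw [Finset.sum_congr rfl fun p _ => expand p]; ring
      _ = (∑ a ∈ Finset.range q, (X ^ q : Polynomial (ZMod 2)) ^ a) *
            (∑ b ∈ Finset.range q, X ^ b) + (X ^ q) ^ (q - 1) * X ^ (q - 1) := key n X (X ^ q)
      _ = (∑ i ∈ Finset.range (q * q), (X : Polynomial (ZMod 2)) ^ i) + X ^ (q * q - 1) := by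
          congr 1
          · rw [sum_range_mul_base q q (fun i => (X : Polynomial (ZMod 2)) ^ i),
              Finset.sum_mul_sum]
            exact Finset.sum_congr rfl fun a _ => Finset.sum_congr rfl fun b _ => by
              rw [pow_add, mul_comm a q, pow_mul]
          · rw [← pow_mul, ← pow_add]
            congr 1
            have e : ∀ m : ℕ, 1 ≤ m → m * (m - 1) + (m - 1) = m * m - 1 := by
              intro m hm
              obtain ⟨r, rfl⟩ : ∃ r, m = r + 1 := ⟨m - 1, by omega⟩
              simp only [Nat.add_sub_cancel]
              have : (r + 1) * (r + 1) = (r + 1) * r + r + 1 := by ring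
              omega
            exact e q (by omega)
      _ = ∑ i ∈ Finset.range (4 ^ (n + 1) - 1), (X : Polynomial (ZMod 2)) ^ i := by
          have hsplit : q * q = (q * q - 1) + 1 := by
            have : 0 < q * q := Nat.mul_pos (by omega) (by omega)
            omega
          rw [hsplit, Finset.sum_range_succ, ← hqq]
          rw [add_assoc]
          have : (X : Polynomial (ZMod 2)) ^ (q * q - 1) + X ^ (q * q - 1) = 0 := by
            rw [← two_mul, two_eq_zero, zero_mul]
          rw [← hsplit, this, add_zero]
end

section
/- For every k ≥ 1 and every set B ⊆ ℕ, if (1 + X + X^{2^k})·(Σ_{b∈B} X^b) = 1 + X + ... + X^{N-1} in F_2[X] for some N, then |B| ≥ 4^k - 3^k (equivalently N ≥ 4^k - 1): the compact mod-2 tiling of {0,1,2^k} constructed greedily is minimal. -/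
/-!
With `m = 2^k`, the coefficients `d` of `∑_{b ∈ B} X^b` satisfy `d n + d (n - 1) + d (n - m) = 1`
for `n < N`; as `1 + X + X^m` is a unit in `𝔽₂⟦X⟧`, they agree below `N` with the coefficients
`c` of `1 / ((1 + X)(1 + X + X^m))`. Writing `n = (m - 1) q + s` with `s < m - 1`, one has
`c n = 1 + binom(s + 2, q + 1)` for `q < m`: inside a block the recurrence is Pascal's rule, across
a block boundary it is the evenness of `binom(m, j)` for `0 < j < m`.
The top coefficient of the product makes `d` vanish on the last `m` indices below `N`, whereas
every window of `m` consecutive terms of `c` before index `m² - 1` contains a one; hence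
`N ≥ m² - 1`. So `B` contains the ones of `c` below `m (m - 1)`, and by Lucas' theorem (a
`2^k × 2^k` square of Pascal's triangle has `3^k` odd entries) there are `4^k - 3^k` of them.
-/

open scoped Polynomial

namespace PowerSeries

theorem coeff_eq_of_coeff_mul_eq {R : Type*} [CommRing R] {f g h : R⟦X⟧}
    (hf : IsUnit (constantCoeff f)) {L : ℕ} (H : ∀ n < L, coeff n (f * g) = coeff n (f * h)) :
    ∀ n < L, coeff n g = coeff n h := by
  have hdvd : X ^ L ∣ f * (g - h) :=
    X_pow_dvd_iff.2 fun n hn => by rw [mul_sub, map_sub, H n hn, sub_self]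
  rw [(isUnit_iff_constantCoeff.2 hf).dvd_mul_left] at hdvd
  exact fun n hn => sub_eq_zero.1 (by simpa using X_pow_dvd_iff.1 hdvd n hn)

theorem coeff_one_add_X_add_X_pow_mul {R : Type*} [Semiring R] (m n : ℕ) (φ : R⟦X⟧) :
    coeff n ((1 + X + X ^ m) * φ) = coeff n φ
      + (if 1 ≤ n then coeff (n - 1) φ else 0) + (if m ≤ n then coeff (n - m) φ else 0) := by
  rw [← coeff_X_pow_mul', ← coeff_X_pow_mul', pow_one, add_mul, add_mul, one_mul, map_add, map_add]

theorem coeff_coe_sum_X_pow {R : Type*} [Semiring R] (B : Finset ℕ) (n : ℕ) :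
    coeff n ((∑ b ∈ B, Polynomial.X ^ b : R[X]) : R⟦X⟧) = if n ∈ B then 1 else 0 := by
  simp [Polynomial.coeff_X_pow]

end PowerSeries

section BinomialParity

open Finset

theorem Finset.sum_range_mul_eq_sum_sum {M : Type*} [AddCommMonoid M] (f : ℕ → M) (a b : ℕ) :
    ∑ n ∈ range (a * b), f n = ∑ q ∈ range b, ∑ s ∈ range a, f (a * q + s) := by
  induction b with
  | zero => simp
  | succ b ih => rw [Nat.mul_succ, sum_range_add, ih, sum_range_succ]

theorem choose_mod_two_lucas (q r : ℕ) {i j : ℕ} (hi : i < 2) (hj : j < 2) :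
    (2 * q + i).choose (2 * r + j) % 2 = i.choose j * q.choose r % 2 := by
  have h := Choose.choose_modEq_choose_mod_mul_choose_div_nat (p := 2)
    (n := 2 * q + i) (k := 2 * r + j)
  rwa [Nat.mul_add_mod, Nat.mul_add_mod, Nat.mod_eq_of_lt hi, Nat.mod_eq_of_lt hj,
    Nat.mul_add_div two_pos, Nat.mul_add_div two_pos, Nat.div_eq_of_lt hi,
    Nat.div_eq_of_lt hj, add_zero, add_zero] at h

theorem sum_choose_mod_two_range_two_pow (k : ℕ) :
    ∑ a ∈ range (2 ^ k), ∑ b ∈ range (2 ^ k), a.choose b % 2 = 3 ^ k := by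
  induction k with
  | zero => simp
  | succ k ih =>
    have hquad : ∀ q r, ∑ i ∈ range 2, ∑ j ∈ range 2, (2 * q + i).choose (2 * r + j) % 2
        = 3 * (q.choose r % 2) := by
      intro q r
      simp only [sum_range_succ, sum_range_zero, zero_add,
        choose_mod_two_lucas q r (i := 0) (j := 0) (by norm_num) (by norm_num),
        choose_mod_two_lucas q r (i := 0) (j := 1) (by norm_num) (by norm_num),
        choose_mod_two_lucas q r (i := 1) (j := 0) (by norm_num) (by norm_num),
        choose_mod_two_lucas q r (i := 1) (j := 1) (by norm_num) (by norm_num)]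
      simp only [Nat.choose_self, one_mul, Nat.choose_succ_self, zero_mul, Nat.zero_mod, add_zero,
        Nat.choose_succ_self_right, zero_add]
      ring
    rw [pow_succ', sum_range_mul_eq_sum_sum]
    simp_rw [sum_range_mul_eq_sum_sum (fun b => Nat.choose _ b % 2)]
    rw [pow_succ', ← ih, mul_sum]
    refine sum_congr rfl fun q _ => ?_
    rw [sum_comm, mul_sum]
    exact sum_congr rfl fun r _ => hquad q r

theorem sum_choose_mod_two_shifted (k : ℕ) :
    ∑ q ∈ range (2 ^ k), ∑ s ∈ range (2 ^ k - 1), (s + 2).choose (q + 1) % 2 + 2 ^ k = 3 ^ k := by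
  have hinner : ∀ j, 0 < j → j < 2 ^ k → (2 ^ k).choose j % 2 = 0 := fun j hj hjk =>
    Nat.mod_eq_zero_of_dvd (Nat.prime_two.dvd_choose_pow hj.ne' hjk.ne)
  have hsierp := sum_choose_mod_two_range_two_pow k
  obtain ⟨w, hw⟩ : ∃ w, 2 ^ k = w + 1 := ⟨2 ^ k - 1, by have := Nat.one_le_two_pow (n := k); omega⟩
  rw [hw] at hinner hsierp ⊢
  obtain ⟨G, hG⟩ : ∃ G : ℕ → ℕ, ∀ a, G a = ∑ q ∈ range (w + 1), a.choose (q + 1) % 2 :=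
    ⟨_, fun _ => rfl⟩
  have hrow : ∀ a < w + 1, G a + 1 = ∑ b ∈ range (w + 1), a.choose b % 2 := by
    intro a ha
    rw [hG, sum_range_succ, sum_range_succ', Nat.choose_eq_zero_of_lt (by omega)]
    simp
  have hGtop : G (w + 1) = 1 := by
    rw [hG, sum_range_succ, Nat.choose_self,
      sum_eq_zero fun q hq => hinner _ (by omega) (by simp at hq; omega)]
  have hG0 : G 0 = 0 := by simp [hG]
  have hG1 : G 1 = 1 := by
    rw [hG, sum_range_succ', sum_eq_zero fun q _ => by
      rw [Nat.choose_eq_zero_of_lt (by omega), Nat.zero_mod]]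
    rfl
  have hsplit : ∑ a ∈ range (w + 2), G a = ∑ s ∈ range w, G (s + 2) + G 1 + G 0 := by
    rw [sum_range_succ', sum_range_succ']
  rw [sum_range_succ, hG0, hG1, hGtop] at hsplit
  rw [sum_comm, Nat.add_sub_cancel, ← hsierp,
    ← sum_congr rfl fun a ha => hrow a (mem_range.1 ha), sum_add_distrib]
  simp only [sum_const, card_range, smul_eq_mul, mul_one, ← hG]
  omega

end BinomialParity

/-- For `m` a power of two and `n < m (m - 1)`, the `n`-th coefficient of
`1 / ((1 + X)(1 + X + X^m))` over `𝔽₂`. -/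
def tileSeq (m n : ℕ) : ZMod 2 := 1 + ((n % (m - 1) + 2).choose (n / (m - 1) + 1) : ZMod 2)

theorem tileSeq_succ_mul_add {w s : ℕ} (q : ℕ) (hs : s < w) :
    tileSeq (w + 1) (w * q + s) = 1 + ((s + 2).choose (q + 1) : ZMod 2) := by
  rw [tileSeq, Nat.add_sub_cancel, Nat.mul_add_mod, Nat.mod_eq_of_lt hs,
    Nat.mul_add_div (by omega), Nat.div_eq_of_lt hs, add_zero]

theorem tileSeq_zero (m : ℕ) : tileSeq m 0 = 1 := by
  rw [tileSeq, Nat.zero_mod, Nat.zero_div]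
  decide

theorem exists_tileSeq_eq_one {m : ℕ} (hrow : ∀ j, 0 < j → j < m → (m.choose j : ZMod 2) = 0)
    {t : ℕ} (ht : t + m + 2 ≤ m * m) :
    ∃ n, t ≤ n ∧ n < t + m ∧ n < m * (m - 1) ∧ tileSeq m n = 1 := by
  obtain ⟨w, rfl⟩ : ∃ w, m = w + 1 := ⟨m - 1, by rcases m with _ | m <;> simp_all⟩
  have hsq : (w + 1) * (w + 1) = w * w + 2 * w + 1 := by ring
  have hw : 0 < w := by rcases w with _ | w <;> simp_all
  obtain ⟨q, r, hr, rfl⟩ : ∃ q r, r < w ∧ t = w * q + r :=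
    ⟨t / w, t % w, Nat.mod_lt _ hw, (Nat.div_add_mod t w).symm⟩
  rw [Nat.add_sub_cancel, Nat.succ_mul]
  -- The witness is the last entry `1 + binom(m, q + 1)` of block `q`, or, in the final block
  -- (where that entry is `0`), the entry `1 + binom(m - 1, m)` just before it.
  rcases Nat.lt_or_ge q w with hq | hq
  · have := Nat.mul_le_mul_left w hq
    rw [Nat.mul_succ] at this
    refine ⟨w * q + (w - 1), by omega, by omega, by omega, ?_⟩
    rw [tileSeq_succ_mul_add _ (by omega), show w - 1 + 2 = w + 1 by omega,
      hrow _ (by omega) (by omega), add_zero]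
  · obtain rfl : q = w := by
      by_contra hne
      have := Nat.mul_le_mul_left w (show w + 1 ≤ q by omega)
      rw [Nat.mul_succ] at this
      omega
    refine ⟨q * q + (q - 2), by omega, by omega, by omega, ?_⟩
    rw [tileSeq_succ_mul_add _ (by omega), Nat.choose_eq_zero_of_lt (by omega)]
    simp

open Finset in
theorem card_tileSeq_eq_one (k : ℕ) :
    #{n ∈ range (2 ^ k * (2 ^ k - 1)) | tileSeq (2 ^ k) n = 1} = 4 ^ k - 3 ^ k := by
  have hodd := sum_choose_mod_two_shifted k
  have hsq : 4 ^ k = 2 ^ k * 2 ^ k := by rw [← mul_pow]; norm_num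
  obtain ⟨w, hw⟩ : ∃ w, 2 ^ k = w + 1 := ⟨2 ^ k - 1, by have := Nat.one_le_two_pow (n := k); omega⟩
  rw [hw] at hodd hsq ⊢
  rw [Nat.add_sub_cancel] at hodd ⊢
  have hind : ∀ c : ℕ, (if 1 + (c : ZMod 2) = 1 then 1 else 0) + c % 2 = 1 := by
    intro c
    simp only [add_eq_left, ZMod.natCast_eq_zero_iff_even, Nat.even_iff]
    rcases Nat.mod_two_eq_zero_or_one c with h | h <;> simp [h]
  have htotal : #{n ∈ range ((w + 1) * w) | tileSeq (w + 1) n = 1}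
      + ∑ q ∈ range (w + 1), ∑ s ∈ range w, (s + 2).choose (q + 1) % 2 = (w + 1) * w := by
    rw [card_filter, mul_comm, sum_range_mul_eq_sum_sum, ← sum_add_distrib]
    simp_rw [← sum_add_distrib]
    rw [sum_congr rfl fun q _ => sum_congr rfl fun s hs => by
      rw [tileSeq_succ_mul_add q (mem_range.1 hs), hind]]
    simp [mul_comm]
  rw [hsq, ← hodd, Nat.mul_succ]
  omega

section Recurrence

open PowerSeries

variable {w : ℕ}

theorem coeff_mul_mk_tileSeq_mul (hrow : ∀ j, 0 < j → j < w + 1 → ((w + 1).choose j : ZMod 2) = 0)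
    {q : ℕ} (hq : q ≤ w) (hw : 0 < w) :
    coeff (w * q) ((1 + X + X ^ (w + 1)) * mk (tileSeq (w + 1))) = 1 := by
  rw [coeff_one_add_X_add_X_pow_mul]
  simp only [coeff_mk]
  rw [← add_zero (w * q)]
  rcases q with _ | _ | q
  · rw [if_neg (by omega), if_neg (by omega), tileSeq_succ_mul_add 0 hw]
    decide
  · rw [if_pos (by omega), if_neg (by omega), show w * (0 + 1) + 0 - 1 = w * 0 + (w - 1) by omega,
      tileSeq_succ_mul_add 1 hw, tileSeq_succ_mul_add 0 (by omega),
      show w - 1 + 2 = w + 1 by omega, hrow (0 + 1) (by omega) (by omega)]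
    decide
  · have hle : w + 1 ≤ w * (q + 1 + 1) + 0 := by nlinarith
    rw [if_pos (by omega), if_pos hle,
      show w * (q + 1 + 1) + 0 - 1 = w * (q + 1) + (w - 1) by rw [Nat.mul_succ]; omega,
      show w * (q + 1 + 1) + 0 - (w + 1) = w * q + (w - 1) by
        rw [Nat.mul_succ, Nat.mul_succ]; omega,
      tileSeq_succ_mul_add _ hw, tileSeq_succ_mul_add _ (by omega),
      tileSeq_succ_mul_add _ (by omega), show w - 1 + 2 = w + 1 by omega,
      hrow _ (by omega) (by omega), hrow _ (by omega) (by omega),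
      Nat.choose_eq_zero_of_lt (by omega : 0 + 2 < q + 1 + 1 + 1)]
    decide

theorem coeff_mul_mk_tileSeq_mul_add_succ {q s : ℕ} (hs : s + 1 < w) :
    coeff (w * q + (s + 1)) ((1 + X + X ^ (w + 1)) * mk (tileSeq (w + 1))) = 1 := by
  rw [coeff_one_add_X_add_X_pow_mul]
  simp only [coeff_mk]
  rcases q with _ | q
  · rw [if_pos (by omega), if_neg (by omega), show w * 0 + (s + 1) - 1 = w * 0 + s by omega,
      tileSeq_succ_mul_add 0 hs, tileSeq_succ_mul_add 0 (by omega)]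
    rw [Nat.choose_one_right, Nat.choose_one_right]
    push_cast
    ring_nf
    reduce_mod_char
  · have hle : w + 1 ≤ w * (q + 1) + (s + 1) := by nlinarith
    have pascal : (s + 1 + 2).choose (q + 1 + 1)
        = (s + 2).choose (q + 1) + (s + 2).choose (q + 1 + 1) := Nat.choose_succ_succ _ _
    rw [if_pos (by omega), if_pos hle,
      show w * (q + 1) + (s + 1) - 1 = w * (q + 1) + s by omega,
      show w * (q + 1) + (s + 1) - (w + 1) = w * q + s by rw [Nat.mul_succ]; omega,
      tileSeq_succ_mul_add _ hs, tileSeq_succ_mul_add _ (by omega),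
      tileSeq_succ_mul_add _ (by omega), pascal]
    push_cast
    ring_nf
    reduce_mod_char

theorem coeff_mul_mk_tileSeq {m : ℕ} (hm : 2 ≤ m)
    (hrow : ∀ j, 0 < j → j < m → (m.choose j : ZMod 2) = 0) {n : ℕ} (hn : n < m * (m - 1)) :
    coeff n ((1 + X + X ^ m) * mk (tileSeq m)) = 1 := by
  obtain ⟨w, rfl⟩ : ∃ w, m = w + 1 := ⟨m - 1, by omega⟩
  have hw : 0 < w := by omega
  obtain ⟨q, s, hs, rfl⟩ : ∃ q s, s < w ∧ n = w * q + s :=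
    ⟨n / w, n % w, Nat.mod_lt _ hw, (Nat.div_add_mod n w).symm⟩
  rcases s with _ | s
  · refine coeff_mul_mk_tileSeq_mul hrow ?_ hw
    rw [Nat.add_sub_cancel] at hn
    by_contra! h
    nlinarith
  · exact coeff_mul_mk_tileSeq_mul_add_succ hs

end Recurrence

def IsCompactComplement (m N : ℕ) (B : Finset ℕ) : Prop :=
  (1 + Polynomial.X + Polynomial.X ^ m) * (∑ b ∈ B, (Polynomial.X : (ZMod 2)[X]) ^ b)
    = ∑ i ∈ Finset.range N, Polynomial.X ^ i

namespace IsCompactComplement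

open PowerSeries

variable {m N : ℕ} {B : Finset ℕ}

theorem coeff_mul (htile : IsCompactComplement m N B) (n : ℕ) :
    coeff n ((1 + X + X ^ m) * ((∑ b ∈ B, Polynomial.X ^ b : (ZMod 2)[X]) : (ZMod 2)⟦X⟧))
      = if n < N then 1 else 0 := by
  rw [← Polynomial.coe_X, ← Polynomial.coe_one, ← Polynomial.coe_pow, ← Polynomial.coe_add,
    ← Polynomial.coe_add, ← Polynomial.coe_mul, htile, coeff_coe_sum_X_pow]
  simp only [Finset.mem_range]

theorem add_lt_of_mem (htile : IsCompactComplement m N B) (hm : 2 ≤ m) {b : ℕ} (hb : b ∈ B) :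
    b + m < N := by
  set M := B.max' ⟨b, hb⟩
  have hMB : M ∈ B := B.max'_mem _
  have htop := htile.coeff_mul (M + m)
  rw [coeff_one_add_X_add_X_pow_mul, coeff_coe_sum_X_pow, coeff_coe_sum_X_pow,
    coeff_coe_sum_X_pow, if_neg fun h => by have := B.le_max' _ h; omega,
    if_pos (by omega), if_neg fun h => by have := B.le_max' _ h; omega, if_pos (by omega),
    Nat.add_sub_cancel, if_pos hMB] at htop
  have hbM := B.le_max' b hb
  by_contra hN
  rw [if_neg (by omega)] at htop
  simp at htop

theorem mem_iff_tileSeq_eq_one (htile : IsCompactComplement m N B) (hm : 2 ≤ m)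
    (hrow : ∀ j, 0 < j → j < m → (m.choose j : ZMod 2) = 0) {n : ℕ} (hnN : n < N)
    (hn : n < m * (m - 1)) : n ∈ B ↔ tileSeq m n = 1 := by
  have hunit : IsUnit (constantCoeff (1 + PowerSeries.X + PowerSeries.X ^ m : (ZMod 2)⟦X⟧)) := by
    simp [zero_pow (by omega : m ≠ 0)]
  have heq := coeff_eq_of_coeff_mul_eq (h := mk (tileSeq m)) hunit (L := min N (m * (m - 1)))
    (fun n hn => by
      rw [htile.coeff_mul, if_pos (lt_of_lt_of_le hn (min_le_left _ _)),
        coeff_mul_mk_tileSeq hm hrow (lt_of_lt_of_le hn (min_le_right _ _))])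
    n (lt_min hnN hn)
  rw [coeff_coe_sum_X_pow, coeff_mk] at heq
  split_ifs at heq with h
  · simp [h, heq]
  · simp [h, ← heq]

end IsCompactComplement

open Polynomial

/-- Minimality: any compact mod-2 tiling complement `B` of the pattern `{0,1,2^k}` has at
least `4^k - 3^k` elements (equivalently its period `N` is at least `4^k - 1`). -/
theorem stmt_15 (k : ℕ) (hk : 1 ≤ k) (B : Finset ℕ) (N : ℕ) (hN : 0 < N)
    (htile : (1 + X + X ^ (2 ^ k)) * (∑ b ∈ B, (X : Polynomial (ZMod 2)) ^ b)
        = ∑ i ∈ Finset.range N, (X : Polynomial (ZMod 2)) ^ i) :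
    4 ^ k - 3 ^ k ≤ B.card ∧ 4 ^ k - 1 ≤ N := by
  have hm : 2 ≤ 2 ^ k := Nat.le_self_pow (by omega) 2
  have hrow : ∀ j, 0 < j → j < 2 ^ k → ((2 ^ k).choose j : ZMod 2) = 0 := fun j hj hjk =>
    (ZMod.natCast_eq_zero_iff _ 2).2 (Nat.prime_two.dvd_choose_pow hj.ne' hjk.ne)
  have hmem : ∀ {n}, n < N → n < 2 ^ k * (2 ^ k - 1) → (n ∈ B ↔ tileSeq (2 ^ k) n = 1) :=
    IsCompactComplement.mem_iff_tileSeq_eq_one htile hm hrow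
  have hsq : 4 ^ k = 2 ^ k * 2 ^ k := by rw [← mul_pow]; norm_num
  have hblock : 2 ^ k * (2 ^ k - 1) = 2 ^ k * 2 ^ k - 2 ^ k := Nat.mul_sub_one _ _
  have h0 : 2 ^ k < N := by
    have h0B := (hmem hN (Nat.mul_pos (by omega) (by omega))).2 (tileSeq_zero _)
    simpa using IsCompactComplement.add_lt_of_mem htile hm h0B
  have hNbound : 4 ^ k - 1 ≤ N := by
    by_contra! hlt
    obtain ⟨n, htn, hnt, hn, hone⟩ := exists_tileSeq_eq_one hrow (t := N - 2 ^ k) (by omega)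
    have := IsCompactComplement.add_lt_of_mem htile hm ((hmem (by omega) hn).2 hone)
    omega
  refine ⟨?_, hNbound⟩
  rw [← card_tileSeq_eq_one k]
  refine Finset.card_le_card fun n hn => ?_
  rw [Finset.mem_filter, Finset.mem_range] at hn
  exact (hmem (by omega) hn.1).2 hn.2
end
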